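/- Assume additionally 30·κ < U. Fix n ∈ ℤ and set r_n = χ(30n). Then for every d ∈ {1, …, 30}, χ(30n + d − 1) ≡ r_n − (d−1)·κ (mod U). Moreover: if r_n < 30·κ, then there is exactly one d ∈ {1, …, 30} for which the label 30n + d − 1 is skipped, namely d = ⌊r_n/κ⌋ + 1; and if r_n ≥ 30·κ, then none of the labels 30n, 30n+1, …, 30n+29 is skipped. -/

import Mathlib

/-!
With `c = V K + δ*`, the label `K` is a value `⌊Δ₀ + j U / V⌋` iff `V K ≤ V Δ₀ + j U < V K + V`
for some `j`, i.e. iff the interval `(c, c + V]` contains a multiple of `U`, i.e. iff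
`U - V ≤ c mod U = χ K`. Increasing the label by one adds `V ≡ -κ (mod U)` to `c`, so along the
labels `30n, …, 30n + 29` the index `χ` runs down from `r_n` in steps of `κ`. Since `30κ < U`,
after wrapping below `0` it stays `≥ κ`, so exactly the step with `(d - 1)κ ≤ r_n < dκ`, if any,
lands in `[0, κ)`.
-/

theorem Int.exists_mul_mem_Ioc_iff_sub_le_emod (a V : ℤ) {U : ℤ} (hU : 0 < U) :
    (∃ j : ℤ, a < j * U ∧ j * U ≤ a + V) ↔ U - V ≤ a % U := by
  have hdiv := Int.ediv_mul_add_emod a U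
  have hr := Int.emod_lt_of_pos a hU
  constructor
  · rintro ⟨j, hlo, hhi⟩
    -- the first multiple of `U` above `a` is `(a / U + 1) * U`
    have hq : a / U + 1 ≤ j :=
      Int.lt_of_mul_lt_mul_right (by linarith [Int.emod_nonneg a hU.ne']) hU.le
    nlinarith
  · intro h
    exact ⟨a / U + 1, by linarith, by linarith⟩

theorem floor_add_mul_div_eq_iff {U V : ℤ} (hV : 0 < V) (Δ₀ : ℝ) (j K : ℤ) :
    ⌊Δ₀ + j * ((U : ℝ) / V)⌋ = K ↔
      ⌈-(V : ℝ) * Δ₀⌉ ≤ j * U - V * K ∧ j * U - V * K - V < ⌈-(V : ℝ) * Δ₀⌉ := by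
  have hVR : (0 : ℝ) < V := by exact_mod_cast hV
  have hx : Δ₀ + j * ((U : ℝ) / V) = (V * Δ₀ + j * U) / V := by field_simp
  rw [Int.floor_eq_iff, Int.ceil_le, Int.lt_ceil, hx, le_div_iff₀ hVR, div_lt_iff₀ hVR]
  push_cast
  constructor <;> rintro ⟨h₁, h₂⟩ <;> constructor <;> linarith

theorem mem_range_floor_add_mul_div_iff {U V : ℤ} (hV : 0 < V) (hU : 0 < U) (Δ₀ : ℝ) (K : ℤ) :
    K ∈ Set.range (fun j : ℤ => ⌊Δ₀ + j * ((U : ℝ) / V)⌋) ↔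
      U - V ≤ (V * K + (⌈-(V : ℝ) * Δ₀⌉ - 1)) % U := by
  rw [← Int.exists_mul_mem_Ioc_iff_sub_le_emod _ _ hU]
  simp only [Set.mem_range, floor_add_mul_div_eq_iff hV]
  refine exists_congr fun j => ?_
  constructor <;> rintro ⟨h₁, h₂⟩ <;> constructor <;> linarith

theorem Int.add_mul_add_modEq (U V K t δ : ℤ) :
    V * (K + t) + δ ≡ (V * K + δ) % U - t * (U - V) [ZMOD U] := by
  rw [Int.modEq_iff_dvd]
  exact ⟨-((V * K + δ) / U) - t, by rw [Int.emod_def]; ring⟩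

theorem Int.emod_sub_mul_lt_iff {r t κ U : ℤ} (hκ : 0 < κ) (hr : 0 ≤ r) (hrU : r < U)
    (ht : 0 ≤ t) (htU : (t + 1) * κ ≤ U) :
    (r - t * κ) % U < κ ↔ t = r / κ := by
  rw [eq_comm, Int.ediv_eq_iff_of_pos hκ]
  by_cases hle : t * κ ≤ r
  · rw [Int.emod_eq_of_lt (by linarith) (by nlinarith)]
    constructor
    · intro h; exact ⟨hle, by linarith⟩
    · rintro ⟨-, h⟩; linarith
  · rw [← Int.add_mul_emod_self_right _ 1, Int.emod_eq_of_lt (by nlinarith) (by linarith)]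
    constructor
    · intro h; nlinarith
    · rintro ⟨h, -⟩; exact absurd h hle

theorem stmt18_general (Δ₀ : ℝ) (U V : ℤ) (hV : 0 < V) (hVU : V < U)
    (κ : ℤ) (hκ : κ = U - V) (h30 : 30 * κ < U)
    (A : ℤ → ℤ) (hA : ∀ j : ℤ, A j = ⌊Δ₀ + (j : ℝ) * ((U : ℝ) / (V : ℝ))⌋)
    (δstar : ℤ) (hδstar : δstar = ⌈-(V : ℝ) * Δ₀⌉ - 1)
    (χ : ℤ → ℤ) (hχ : ∀ K : ℤ, χ K = (V * K + δstar) % U)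
    (n : ℤ) :
    (∀ d : ℤ, 1 ≤ d → d ≤ 30 →
      χ (30 * n + d - 1) ≡ χ (30 * n) - (d - 1) * κ [ZMOD U]) ∧
    (χ (30 * n) < 30 * κ →
      ∀ d : ℤ, 1 ≤ d → d ≤ 30 →
        ((30 * n + d - 1) ∉ Set.range A ↔ d = χ (30 * n) / κ + 1)) ∧
    (30 * κ ≤ χ (30 * n) →
      ∀ d : ℤ, 1 ≤ d → d ≤ 30 → (30 * n + d - 1) ∈ Set.range A) := by
  have hU : 0 < U := hV.trans hVU
  have hκpos : 0 < κ := by omega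
  have hskip (K : ℤ) : K ∈ Set.range A ↔ κ ≤ χ K := by
    rw [show A = _ from funext hA, mem_range_floor_add_mul_div_iff hV hU, hχ, hδstar, hκ]
  set r := χ (30 * n)
  have hshift (t : ℤ) : V * (30 * n + t) + δstar ≡ r - t * κ [ZMOD U] := by
    simpa only [r, hχ, hκ] using Int.add_mul_add_modEq U V (30 * n) t δstar
  have hr : 0 ≤ r ∧ r < U := by
    simpa only [r, hχ] using ⟨Int.emod_nonneg _ hU.ne', Int.emod_lt_of_pos _ hU⟩
  have hwindow (d : ℤ) (hd₁ : 1 ≤ d) (hd₂ : d ≤ 30) :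
      30 * n + d - 1 ∉ Set.range A ↔ d - 1 = r / κ := by
    rw [hskip, not_le, hχ, show 30 * n + d - 1 = 30 * n + (d - 1) by ring, hshift (d - 1),
      Int.emod_sub_mul_lt_iff hκpos hr.1 hr.2 (by omega) (by nlinarith)]
  refine ⟨fun d _ _ => ?_, fun _ d hd₁ hd₂ => ?_, fun hr30 d hd₁ hd₂ => ?_⟩
  · rw [hχ, show 30 * n + d - 1 = 30 * n + (d - 1) by ring]
    exact (Int.mod_modEq _ _).trans (hshift (d - 1))
  · rw [hwindow d hd₁ hd₂]
    omega
  · have h30r : 30 ≤ r / κ := (Int.le_ediv_iff_mul_le hκpos).2 hr30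
    by_contra hskipped
    have := (hwindow d hd₁ hd₂).1 hskipped
    omega

/-- In-month skip location: assume `30·κ < U`, fix `n` and set `r_n = χ(30n)`. Then for
`d ∈ {1,…,30}` one has `χ(30n+d-1) ≡ r_n - (d-1)·κ (mod U)`; if `r_n < 30·κ` then exactly
one `d ∈ {1,…,30}` gives a skipped label `30n+d-1`, namely `d = ⌊r_n/κ⌋ + 1`; and if
`r_n ≥ 30·κ` then none of the labels `30n,…,30n+29` is skipped. -/
theorem stmt18 (Δ₀ : ℝ) (U V : ℤ) (hV : 0 < V) (hVU : V < U) (hU2V : U < 2 * V)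
    (κ : ℤ) (hκ : κ = U - V) (h30 : 30 * κ < U)
    (A : ℤ → ℤ) (hA : ∀ j : ℤ, A j = ⌊Δ₀ + (j : ℝ) * ((U : ℝ) / (V : ℝ))⌋)
    (δstar : ℤ) (hδstar : δstar = ⌈-(V : ℝ) * Δ₀⌉ - 1)
    (χ : ℤ → ℤ) (hχ : ∀ K : ℤ, χ K = (V * K + δstar) % U)
    (n : ℤ) :
    (∀ d : ℤ, 1 ≤ d → d ≤ 30 →
      χ (30 * n + d - 1) ≡ χ (30 * n) - (d - 1) * κ [ZMOD U]) ∧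
    (χ (30 * n) < 30 * κ →
      ∀ d : ℤ, 1 ≤ d → d ≤ 30 →
        ((30 * n + d - 1) ∉ Set.range A ↔ d = χ (30 * n) / κ + 1)) ∧
    (30 * κ ≤ χ (30 * n) →
      ∀ d : ℤ, 1 ≤ d → d ≤ 30 → (30 * n + d - 1) ∈ Set.range A) :=
  stmt18_general Δ₀ U V hV hVU κ hκ h30 A hA δstar hδstar χ hχ n
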